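/- arXiv:1808.05048 — 5 statements merged into one kernel-verified Lean document; each statement's English description precedes it below -/
import Mathlib

section
/- If Φ : Mₙ(ℂ) → Mₘ(ℂ) is a linear map such that the Choi matrix C_Φ = Σ_{i,j} E_{ij} ⊗ Φ(E_{ij}) is positive semidefinite, then there exist matrices K₁,…,K_p ∈ M_{m,n}(ℂ) such that Φ(X) = Σᵢ Kᵢ X Kᵢ* for all X. -/
/-!
The Choi matrix depends linearly and injectively on `Φ`, and the Choi matrix of
`X ↦ K * X * Kᴴ` is the rank-one matrix `vecMulVec (vec K) (star (vec K))`. A positive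
semidefinite matrix is a finite sum of such rank-one matrices, so the Choi matrix of `Φ` is
that of a sum of maps `X ↦ Kₖ * X * Kₖᴴ`, and injectivity identifies `Φ` with this sum.
-/

open Matrix Kronecker ComplexOrder

namespace Matrix

section

variable {ι κ R : Type*} [Fintype ι] [CommSemiring R]

section

variable [DecidableEq ι]

def choiMatrix : (Matrix ι ι R →ₗ[R] Matrix κ κ R) →ₗ[R] Matrix (ι × κ) (ι × κ) R where
  toFun Φ := ∑ i, ∑ j, single i j 1 ⊗ₖ Φ (single i j 1)
  map_add' Φ Ψ := by simp [kronecker_add, Finset.sum_add_distrib]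
  map_smul' c Φ := by simp [kronecker_smul, Finset.smul_sum]

theorem choiMatrix_apply (Φ : Matrix ι ι R →ₗ[R] Matrix κ κ R) (i j : ι) (a b : κ) :
    choiMatrix Φ (i, a) (j, b) = Φ (single i j 1) a b := by
  simp [choiMatrix, sum_apply, single_apply, ite_and]

theorem choiMatrix_injective :
    Function.Injective (choiMatrix : (Matrix ι ι R →ₗ[R] Matrix κ κ R) → _) := by
  intro Φ Ψ h
  refine ext_linearMap (R := R) fun i j => LinearMap.ext_ring <| Matrix.ext fun a b => ?_
  simpa only [LinearMap.comp_apply, singleLinearMap_apply, choiMatrix_apply] using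
    congr_fun₂ h (i, a) (j, b)

end

variable [StarRing R]

def sandwichLinearMap (K : Matrix κ ι R) : Matrix ι ι R →ₗ[R] Matrix κ κ R :=
  mulRightLinearMap κ R Kᴴ ∘ₗ mulLeftLinearMap ι R K

@[simp]
theorem sandwichLinearMap_apply (K : Matrix κ ι R) (X : Matrix ι ι R) :
    sandwichLinearMap K X = K * X * Kᴴ :=
  rfl

variable [DecidableEq ι]

theorem choiMatrix_sandwichLinearMap (K : Matrix κ ι R) :
    choiMatrix (sandwichLinearMap K) = vecMulVec (vec K) (star (vec K)) := by
  ext ⟨i, a⟩ ⟨j, b⟩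
  simp [choiMatrix_apply, mul_apply, single_apply, vecMulVec_apply, ite_and]

theorem eq_sum_sandwichLinearMap_of_choiMatrix_eq {σ : Type*} [Fintype σ]
    {Φ : Matrix ι ι R →ₗ[R] Matrix κ κ R} (K : σ → Matrix κ ι R)
    (h : choiMatrix Φ = ∑ k, vecMulVec (vec (K k)) (star (vec (K k)))) :
    Φ = ∑ k, sandwichLinearMap (K k) :=
  choiMatrix_injective <| by simp_rw [map_sum, choiMatrix_sandwichLinearMap, h]

end

theorem exists_eq_sum_sandwichLinearMap_of_posSemidef_choiMatrix {ι κ 𝕜 : Type*} [Fintype ι]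
    [DecidableEq ι] [Finite κ] [RCLike 𝕜] {Φ : Matrix ι ι 𝕜 →ₗ[𝕜] Matrix κ κ 𝕜}
    (h : (choiMatrix Φ).PosSemidef) :
    ∃ (p : ℕ) (K : Fin p → Matrix κ ι 𝕜), Φ = ∑ k, sandwichLinearMap (K k) := by
  obtain ⟨p, v, hv⟩ := posSemidef_iff_eq_sum_vecMulVec.mp h
  exact ⟨p, fun k => of fun a i => v k (i, a), eq_sum_sandwichLinearMap_of_choiMatrix_eq _ hv⟩

end Matrix

theorem stmt0 {n m : ℕ}
    (Φ : Matrix (Fin n) (Fin n) ℂ →ₗ[ℂ] Matrix (Fin m) (Fin m) ℂ)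
    (h : (∑ i : Fin n, ∑ j : Fin n,
        Matrix.single i j (1 : ℂ) ⊗ₖ Φ (Matrix.single i j 1)).PosSemidef) :
    ∃ (p : ℕ) (K : Fin p → Matrix (Fin m) (Fin n) ℂ),
      ∀ X, Φ X = ∑ i, K i * X * (K i)ᴴ := by
  obtain ⟨p, K, hK⟩ := exists_eq_sum_sandwichLinearMap_of_posSemidef_choiMatrix h
  refine ⟨p, K, fun X => ?_⟩
  rw [hK, LinearMap.sum_apply]
  simp only [sandwichLinearMap_apply]
end

section
/- Any correlation matrix of the form z z* with z ∈ ℂⁿ, |zᵢ| = 1 for all i, is an extreme point of the set 𝓔ₙ of n×n correlation matrices. -/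
open Matrix ComplexOrder Metric

/-!
Every entry of a correlation matrix lies in the closed unit disc, since its 2×2 principal minors
are nonnegative. The entries `z i * star (z j)` lie on the unit circle, and points of the circle
are extreme points of the disc because `ℂ` is strictly convex. So if `z z*` is a proper convex
combination of correlation matrices `A` and `B`, then entrywise `A i j = B i j = z i * star (z j)`.
-/

namespace Matrix.PosSemidef

variable {𝕜 n : Type*} [RCLike 𝕜] {M : Matrix n n 𝕜}

theorem norm_apply_sq_le (hM : M.PosSemidef) (i j : n) :
    ‖M i j‖ ^ 2 ≤ RCLike.re (M i i) * RCLike.re (M j j) := by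
  have hdet := (hM.submatrix ![i, j]).det_nonneg
  rw [det_fin_two] at hdet
  simp only [submatrix_apply, Matrix.cons_val_zero, Matrix.cons_val_one] at hdet
  rw [← hM.1.apply i j, RCLike.star_def, RCLike.conj_mul, ← hM.1.coe_re_apply_self i,
    ← hM.1.coe_re_apply_self j, ← RCLike.ofReal_mul, ← RCLike.ofReal_pow,
    ← RCLike.ofReal_sub, RCLike.ofReal_nonneg, sub_nonneg] at hdet
  simpa only [← hM.1.apply i j, RCLike.star_def, RCLike.norm_conj] using hdet

theorem norm_apply_le_one (hM : M.PosSemidef) (hdiag : ∀ i, M i i = 1) (i j : n) :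
    ‖M i j‖ ≤ 1 := by
  have := hM.norm_apply_sq_le i j
  simp only [hdiag, RCLike.one_re, mul_one] at this
  exact (sq_le_one_iff₀ (norm_nonneg _)).1 this

end Matrix.PosSemidef

theorem stmt8 {n : ℕ} (z : Fin n → ℂ) (hz : ∀ i, ‖z i‖ = 1)
    (A B : Matrix (Fin n) (Fin n) ℂ)
    (hA : A.PosSemidef) (hA1 : ∀ i, A i i = 1)
    (hB : B.PosSemidef) (hB1 : ∀ i, B i i = 1)
    (t : ℝ) (ht0 : 0 < t) (ht1 : t < 1)
    (h : (Matrix.of fun i j => z i * star (z j)) = t • A + (1 - t) • B) :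
    A = Matrix.of (fun i j => z i * star (z j)) ∧
      B = Matrix.of fun i j => z i * star (z j) := by
  have hext (i j : Fin n) : z i * star (z j) ∈ (closedBall (0 : ℂ) 1).extremePoints ℝ :=
    StrictConvexSpace.sphere_subset_extremePoints_closedBall (0 : ℂ) one_ne_zero <| by
      simp [hz]
  have hseg (i j : Fin n) : z i * star (z j) ∈ openSegment ℝ (A i j) (B i j) :=
    ⟨t, 1 - t, ht0, sub_pos.2 ht1, add_sub_cancel t 1, by simpa using (congrFun₂ h i j).symm⟩
  have hentry (i j : Fin n) : A i j = z i * star (z j) ∧ B i j = z i * star (z j) :=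
    (mem_extremePoints.1 (hext i j)).2 _
    (mem_closedBall_zero_iff.2 (hA.norm_apply_le_one hA1 i j)) _
    (mem_closedBall_zero_iff.2 (hB.norm_apply_le_one hB1 i j)) (hseg i j)
  exact ⟨ext fun i j => (hentry i j).1, ext fun i j => (hentry i j).2⟩
end

section
/- Let C ∈ 𝓔ₙ be a correlation matrix with Gram vectors w₁,…,wₙ ∈ ℂ^p (so wᵢ* wⱼ = c_{ij}), and let Φ(X) = X ∘ C with Kraus operators D_{v₁},…,D_{v_p} coming from the corresponding resolution C = Σ vᵢvᵢ*. Then the complementary channel satisfies Φ^C(X) = Σ_{i=1}^n x_{ii} (wᵢ wᵢ*)ᵀ. -/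
open Matrix ComplexOrder

namespace Matrix

variable {ι m n α : Type*}

theorem sum_sum_smul_single_one [Fintype m] [Fintype n] [DecidableEq m] [DecidableEq n]
    [NonAssocSemiring α] (c : m → n → α) :
    ∑ i, ∑ j, c i j • single i j (1 : α) = of c := by
  simp only [smul_single, smul_eq_mul, mul_one]
  exact (matrix_eq_sum_single (of c)).symm

theorem trace_conjTranspose_diagonal_mul_diagonal_mul [Fintype ι] [DecidableEq ι]
    [NonUnitalSemiring α] [StarRing α] (u v : ι → α) (X : Matrix ι ι α) :
    ((diagonal u)ᴴ * diagonal v * X).trace = ∑ k, star (u k) * v k * X k k := by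
  simp [trace, diagonal_conjTranspose, mul_assoc]

end Matrix

theorem stmt11_general {n p : ℕ}
    (w : Fin n → Fin p → ℂ)
    (v : Fin p → Fin n → ℂ) (hv : ∀ i j, v i j = star (w j i))
    (X : Matrix (Fin n) (Fin n) ℂ) :
    ∑ i : Fin p, ∑ j : Fin p,
        ((Matrix.diagonal (v j))ᴴ * Matrix.diagonal (v i) * X).trace •
          Matrix.single i j (1 : ℂ) =
      ∑ i : Fin n, X i i • Matrix.of fun a b => star (w i a) * w i b := by
  simp only [trace_conjTranspose_diagonal_mul_diagonal_mul, sum_sum_smul_single_one, hv,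
    star_star]
  ext a b
  simp only [Matrix.sum_apply, Matrix.smul_apply, of_apply, smul_eq_mul]
  exact Finset.sum_congr rfl fun k _ => by ring

theorem stmt11 {n p : ℕ} (C : Matrix (Fin n) (Fin n) ℂ) (hC : C.PosSemidef)
    (hdiag : ∀ i, C i i = 1)
    (w : Fin n → Fin p → ℂ) (hGram : ∀ i j, ∑ k, star (w i k) * w j k = C i j)
    (v : Fin p → Fin n → ℂ) (hv : ∀ i j, v i j = star (w j i))
    (X : Matrix (Fin n) (Fin n) ℂ) :
    ∑ i : Fin p, ∑ j : Fin p,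
        ((Matrix.diagonal (v j))ᴴ * Matrix.diagonal (v i) * X).trace •
          Matrix.single i j (1 : ℂ) =
      ∑ i : Fin n, X i i • Matrix.of fun a b => star (w i a) * w i b :=
  stmt11_general w v hv X
end

section
/- Let Φ be a quantum channel on Mₙ(ℂ) with Kraus operators K₁,…,K_p, and let V₁,…,V_p ∈ M_k(ℂ). Then U = Σᵢ Kᵢ ⊗ Vᵢ satisfies U*U = Iₙ ⊗ I_k if and only if for every A in the range of Φ^C, Σ_{i,j} a_{ij} Vⱼ* Vᵢ = Tr(A) I_k. -/
open Matrix Kronecker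

/-!
Since `U*U = ∑ᵢⱼ Kᵢ*Kⱼ ⊗ Vᵢ*Vⱼ`, for `A = Φ^C(X)` the sum `∑ᵢⱼ aᵢⱼ Vⱼ*Vᵢ` is the partial trace
`(Tr ⊗ id)((X ⊗ I) U*U)`, while `Tr A = Tr X` because `Φ` is trace preserving. Taking for `X` the
matrix units recovers every block of `U*U` from these partial traces, so the condition for all `X`
says exactly that `U*U = I`.
-/

namespace Matrix

variable {ι m l R : Type*} [Fintype ι] [Fintype m]

section PartialTrace

variable [CommSemiring R]

def partialTraceLeft : Matrix (m × l) (m × l) R →ₗ[R] Matrix l l R where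
  toFun M := of fun b d => ∑ a, M (a, b) (a, d)
  map_add' M N := by ext; simp [Finset.sum_add_distrib]
  map_smul' c M := by ext; simp [Finset.mul_sum]

theorem partialTraceLeft_apply (M : Matrix (m × l) (m × l) R) (b d : l) :
    partialTraceLeft M b d = ∑ a, M (a, b) (a, d) := rfl

theorem partialTraceLeft_kronecker (A : Matrix m m R) (B : Matrix l l R) :
    partialTraceLeft (A ⊗ₖ B) = A.trace • B := by
  ext b d
  simp [partialTraceLeft_apply, trace, Finset.sum_mul]

variable [Fintype l] [DecidableEq m] [DecidableEq l]

theorem partialTraceLeft_single_kronecker_one_mul (M : Matrix (m × l) (m × l) R)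
    (a c : m) (b d : l) :
    partialTraceLeft ((single c a 1 ⊗ₖ 1) * M) b d = M (a, b) (c, d) := by
  simp [partialTraceLeft_apply, mul_apply, one_apply, single_apply, Fintype.sum_prod_type,
    ite_and]

theorem partialTraceLeft_kronecker_one_mul_eq_iff (M : Matrix (m × l) (m × l) R) :
    (∀ X : Matrix m m R, partialTraceLeft ((X ⊗ₖ 1) * M) = X.trace • 1) ↔ M = 1 := by
  refine ⟨fun h => ?_, fun h X => by rw [h, mul_one, partialTraceLeft_kronecker]⟩
  ext ⟨a, b⟩ ⟨c, d⟩
  rw [← partialTraceLeft_single_kronecker_one_mul M a c b d, h]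
  by_cases hac : a = c
  · subst hac; simp [one_apply]
  · simp [trace_single_eq_of_ne (h := Ne.symm hac), one_apply, hac]

end PartialTrace

section Complementary

variable [Fintype l] [CommSemiring R] [StarRing R]

theorem conjTranspose_sum_kronecker_mul_sum (K : ι → Matrix m m R) (V : ι → Matrix l l R) :
    (∑ i, K i ⊗ₖ V i)ᴴ * (∑ i, K i ⊗ₖ V i) = ∑ i, ∑ j, ((K i)ᴴ * K j) ⊗ₖ ((V i)ᴴ * V j) := by
  simp [conjTranspose_sum, Finset.sum_mul_sum, conjTranspose_kronecker, mul_kronecker_mul]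

variable [DecidableEq ι]

def complementaryChannel (K : ι → Matrix m m R) (X : Matrix m m R) : Matrix ι ι R :=
  ∑ i, ∑ j, ((K i)ᴴ * K j * X).trace • single j i 1

theorem complementaryChannel_apply (K : ι → Matrix m m R) (X : Matrix m m R) (a b : ι) :
    complementaryChannel K X a b = ((K b)ᴴ * K a * X).trace := by
  simp [complementaryChannel, sum_apply, single_apply, ite_and]

theorem trace_complementaryChannel [DecidableEq m] {K : ι → Matrix m m R}
    (hTP : ∑ i, (K i)ᴴ * K i = 1) (X : Matrix m m R) : (complementaryChannel K X).trace = X.trace := by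
  change ∑ i, complementaryChannel K X i i = _
  simp_rw [complementaryChannel_apply, ← trace_sum, ← Finset.sum_mul, hTP, one_mul]

theorem sum_complementaryChannel_smul_eq_partialTraceLeft [DecidableEq l] (K : ι → Matrix m m R)
    (V : ι → Matrix l l R) (X : Matrix m m R) :
    ∑ i, ∑ j, complementaryChannel K X i j • ((V j)ᴴ * V i) =
      partialTraceLeft ((X ⊗ₖ 1) * ((∑ i, K i ⊗ₖ V i)ᴴ * ∑ i, K i ⊗ₖ V i)) := by
  rw [conjTranspose_sum_kronecker_mul_sum, Finset.sum_comm]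
  simp only [Finset.mul_sum, map_sum, ← mul_kronecker_mul, one_mul, partialTraceLeft_kronecker,
    complementaryChannel_apply, trace_mul_comm X]

end Complementary

end Matrix

theorem stmt15 {n p k : ℕ} (K : Fin p → Matrix (Fin n) (Fin n) ℂ)
    (hTP : ∑ i, (K i)ᴴ * K i = 1) (V : Fin p → Matrix (Fin k) (Fin k) ℂ) :
    (∑ i, K i ⊗ₖ V i)ᴴ * (∑ i, K i ⊗ₖ V i) = 1 ↔
      ∀ A : Matrix (Fin p) (Fin p) ℂ,
        (∃ X : Matrix (Fin n) (Fin n) ℂ,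
          A = ∑ i : Fin p, ∑ j : Fin p,
            ((K i)ᴴ * K j * X).trace • Matrix.single j i (1 : ℂ)) →
        ∑ i : Fin p, ∑ j : Fin p, A i j • ((V j)ᴴ * V i) =
          A.trace • (1 : Matrix (Fin k) (Fin k) ℂ) := by
  have hrange : ∀ A : Matrix (Fin p) (Fin p) ℂ, ∀ X, A = complementaryChannel K X →
      (∑ i, ∑ j, A i j • ((V j)ᴴ * V i) = A.trace • 1 ↔
        partialTraceLeft ((X ⊗ₖ 1) * ((∑ i, K i ⊗ₖ V i)ᴴ * ∑ i, K i ⊗ₖ V i)) = X.trace • 1) := by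
    rintro A X rfl
    rw [sum_complementaryChannel_smul_eq_partialTraceLeft, trace_complementaryChannel hTP]
  rw [← partialTraceLeft_kronecker_one_mul_eq_iff]
  exact ⟨fun h A ⟨X, hA⟩ => (hrange A X hA).2 (h X),
    fun h X => (hrange _ X rfl).1 (h _ ⟨X, rfl⟩)⟩
end

section
/- Suppose Φ₁, Φ₂ are quantum channels on Mₙ(ℂ) with Kraus operators {Kᵢ}ᵢ₌₁^p, {Lᵢ}ᵢ₌₁^q, factorized respectively by matrices {V̂ᵢ} ⊂ M_{k₁}(ℂ) and {Ŵᵢ} ⊂ M_{k₂}(ℂ) (trace-orthonormal, with Σ K_i ⊗ V̂_i and Σ L_i ⊗ Ŵ_i unitary). Then for t ∈ (0,1), the channel Φ = tΦ₁ + (1−t)Φ₂ is factorized by the algebra M_{k₁}(ℂ) ⊕ M_{k₂}(ℂ) with trace tr(A⊕B) = t·tr₁(A) + (1−t)·tr₂(B), via the block-diagonal elements Xᵢ = (t^{−1/2} V̂ᵢ) ⊕ 0 for i ≤ p and Xᵢ = 0 ⊕ ((1−t)^{−1/2} Ŵ_{i−p}) for i > p: the operator Σᵢ K̃ᵢ ⊗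 Xᵢ built from Kraus operators {√t Kᵢ} ∪ {√(1−t) Lᵢ} of Φ is unitary and the Xᵢ are trace-orthonormal. -/
/-!
The scalars `√t` and `(√t)⁻¹` cancel across each tensor product, so after regrouping
`Fin n × (Fin k₁ ⊕ Fin k₂)` as `(Fin n × Fin k₁) ⊕ (Fin n × Fin k₂)` the operator `∑ K̃ᵢ ⊗ Xᵢ`
is the block diagonal sum of the two given unitaries. For trace-orthonormality, the `Xᵢ` coming
from different summands have orthogonal supports, and within a summand the weight `t` (resp.
`1 - t`) of the trace exactly compensates the normalisation `t^{-1/2}` (resp. `(1 - t)^{-1/2}`).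
-/

open Matrix Kronecker

namespace Matrix

variable {α l l' m m' n n' p q : Type*}

section Unitary

variable [CommRing α] [StarRing α] [Fintype m] [DecidableEq m]

theorem fromBlocks_mem_unitaryGroup [Fintype n] [DecidableEq n]
    {U : Matrix m m α} {V : Matrix n n α}
    (hU : U ∈ unitaryGroup m α) (hV : V ∈ unitaryGroup n α) :
    fromBlocks U 0 0 V ∈ unitaryGroup (m ⊕ n) α := by
  rw [mem_unitaryGroup_iff'] at hU hV ⊢
  rw [star_eq_conjTranspose, fromBlocks_conjTranspose, fromBlocks_multiply]
  simp [← star_eq_conjTranspose, hU, hV]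

theorem submatrix_equiv_mem_unitaryGroup [Fintype l] [DecidableEq l] (e : l ≃ m)
    {U : Matrix m m α} (hU : U ∈ unitaryGroup m α) : U.submatrix e e ∈ unitaryGroup l α := by
  rw [mem_unitaryGroup_iff'] at hU ⊢
  rw [star_eq_conjTranspose, conjTranspose_submatrix, submatrix_mul_equiv,
    ← star_eq_conjTranspose, hU, submatrix_one_equiv]

end Unitary

theorem smul_kronecker_inv_smul {K : Type*} [Field K] {c : K} (hc : c ≠ 0)
    (A : Matrix l l' K) (B : Matrix m m' K) : (c • A) ⊗ₖ (c⁻¹ • B) = A ⊗ₖ B := by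
  rw [smul_kronecker, kronecker_smul, smul_smul, mul_inv_cancel₀ hc, one_smul]

theorem sum_elim_kronecker_fromBlocks [Semiring α] {ι κ : Type*} [Fintype ι] [Fintype κ]
    (A : ι → Matrix l l' α) (B : ι → Matrix m m' α)
    (C : κ → Matrix l l' α) (D : κ → Matrix n n' α) :
    ∑ i, Sum.elim (fun i => A i ⊗ₖ fromBlocks (B i) 0 0 0)
        (fun j => C j ⊗ₖ fromBlocks 0 0 0 (D j)) i =
      (fromBlocks (∑ i, A i ⊗ₖ B i) 0 0 (∑ j, C j ⊗ₖ D j)).submatrix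
        (Equiv.prodSumDistrib l m n) (Equiv.prodSumDistrib l' m' n') := by
  ext ⟨a, x | y⟩ ⟨b, x' | y'⟩ <;> simp [Fintype.sum_sum_type, sum_apply]

theorem fromBlocks_diagonal_conjTranspose_mul [Semiring α] [StarRing α] [Fintype m] [Fintype n]
    (A : Matrix m m' α) (B : Matrix n n' α) (C : Matrix m p α) (D : Matrix n q α) :
    (fromBlocks A 0 0 B)ᴴ * fromBlocks C 0 0 D = fromBlocks (Aᴴ * C) 0 0 (Bᴴ * D) := by
  rw [fromBlocks_conjTranspose, fromBlocks_multiply]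
  simp

theorem sum_fromBlocks_inl_inl [AddCommMonoid α] [Fintype m] (A : Matrix m m α)
    (B : Matrix m n α) (C : Matrix n m α) (D : Matrix n n α) :
    ∑ a, fromBlocks A B C D (Sum.inl a) (Sum.inl a) = A.trace :=
  rfl

theorem sum_fromBlocks_inr_inr [AddCommMonoid α] [Fintype n] (A : Matrix m m α)
    (B : Matrix m n α) (C : Matrix n m α) (D : Matrix n n α) :
    ∑ b, fromBlocks A B C D (Sum.inr b) (Sum.inr b) = D.trace :=
  rfl

theorem ofReal_mul_trace_inv_sqrt_smul [Fintype m] [Fintype n] {t : ℝ} (ht : 0 < t)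
    (A B : Matrix m n ℂ) :
    (t : ℂ) * (((Real.sqrt t : ℂ)⁻¹ • A)ᴴ * ((Real.sqrt t : ℂ)⁻¹ • B)).trace =
      (Aᴴ * B).trace := by
  have hs : (Real.sqrt t : ℂ) ≠ 0 := by exact_mod_cast (Real.sqrt_pos.2 ht).ne'
  have hss : (Real.sqrt t : ℂ) * Real.sqrt t = t := by
    exact_mod_cast Real.mul_self_sqrt ht.le
  rw [conjTranspose_smul, Matrix.smul_mul, Matrix.mul_smul, trace_smul, trace_smul,
    smul_eq_mul, smul_eq_mul, Complex.star_def, map_inv₀, Complex.conj_ofReal, ← hss]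
  field_simp

end Matrix

theorem stmt16 {n p q k₁ k₂ : ℕ} (t : ℝ) (ht0 : 0 < t) (ht1 : t < 1)
    (K : Fin p → Matrix (Fin n) (Fin n) ℂ) (L : Fin q → Matrix (Fin n) (Fin n) ℂ)
    (V : Fin p → Matrix (Fin k₁) (Fin k₁) ℂ) (W : Fin q → Matrix (Fin k₂) (Fin k₂) ℂ)
    (hV : ∀ i j, ((V i)ᴴ * V j).trace = if i = j then 1 else 0)
    (hW : ∀ i j, ((W i)ᴴ * W j).trace = if i = j then 1 else 0)
    (hUV : (∑ i, K i ⊗ₖ V i) ∈ Matrix.unitaryGroup (Fin n × Fin k₁) ℂ)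
    (hUW : (∑ i, L i ⊗ₖ W i) ∈ Matrix.unitaryGroup (Fin n × Fin k₂) ℂ)
    (Kt : Fin p ⊕ Fin q → Matrix (Fin n) (Fin n) ℂ)
    (hKt : Kt = Sum.elim (fun i => (Real.sqrt t : ℂ) • K i)
      (fun j => (Real.sqrt (1 - t) : ℂ) • L j))
    (X : Fin p ⊕ Fin q → Matrix (Fin k₁ ⊕ Fin k₂) (Fin k₁ ⊕ Fin k₂) ℂ)
    (hX : X = Sum.elim
      (fun i => Matrix.fromBlocks ((Real.sqrt t : ℂ)⁻¹ • V i) 0 0 0)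
      (fun j => Matrix.fromBlocks 0 0 0 ((Real.sqrt (1 - t) : ℂ)⁻¹ • W j))) :
    (∑ i, Kt i ⊗ₖ X i) ∈ Matrix.unitaryGroup (Fin n × (Fin k₁ ⊕ Fin k₂)) ℂ ∧
      ∀ i j, (t : ℂ) * (∑ a : Fin k₁, ((X i)ᴴ * X j) (Sum.inl a) (Sum.inl a)) +
          ((1 - t : ℝ) : ℂ) * (∑ b : Fin k₂, ((X i)ᴴ * X j) (Sum.inr b) (Sum.inr b)) =
        if i = j then 1 else 0 := by
  have ht1' : 0 < 1 - t := sub_pos.2 ht1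
  have hs : (Real.sqrt t : ℂ) ≠ 0 := by exact_mod_cast (Real.sqrt_pos.2 ht0).ne'
  have hs' : (Real.sqrt (1 - t) : ℂ) ≠ 0 := by exact_mod_cast (Real.sqrt_pos.2 ht1').ne'
  refine ⟨?_, ?_⟩
  · have hterm : ∀ i, Kt i ⊗ₖ X i = Sum.elim (fun i => K i ⊗ₖ fromBlocks (V i) 0 0 0)
        (fun j => L j ⊗ₖ fromBlocks 0 0 0 (W j)) i := by
      rintro (i | j) <;> simp only [hKt, hX, Sum.elim_inl, Sum.elim_inr]
      · simpa [fromBlocks_smul] using smul_kronecker_inv_smul hs (K i) (fromBlocks (V i) 0 0 0)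
      · simpa [fromBlocks_smul] using smul_kronecker_inv_smul hs' (L j) (fromBlocks 0 0 0 (W j))
    rw [Fintype.sum_congr _ _ hterm, sum_elim_kronecker_fromBlocks]
    exact submatrix_equiv_mem_unitaryGroup _ (fromBlocks_mem_unitaryGroup hUV hUW)
  · subst hX
    rintro (i | i) (j | j) <;>
      simp only [Sum.elim_inl, Sum.elim_inr, fromBlocks_diagonal_conjTranspose_mul,
        sum_fromBlocks_inl_inl, sum_fromBlocks_inr_inr, ofReal_mul_trace_inv_sqrt_smul ht0,
        ofReal_mul_trace_inv_sqrt_smul ht1', hV, hW] <;>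
      simp
end
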